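/- Wick ordering is insensitive to repetition/omission of variables: let X = (X₁,…,X_n) be a random vector, J: {1,…,m} → {1,…,n} a function, and Y = (X_{J(1)},…,X_{J(m)}). If α ∈ ℕ^m and β ∈ ℕ^n satisfy β_j = Σ_{i: J(i)=j} α_i, then X^β = Y^α and :Y^α: = :X^β: almost surely (assuming moments of order |α| exist). -/

import Mathlib

open MeasureTheory MvPolynomial

noncomputable section

def mdeg {ι : Type*} [Fintype ι] (β : ι →₀ ℕ) : ℕ := ∑ i, β i

def IsSegalFamily {ι : Type*} [Fintype ι] [DecidableEq ι]
    (μ : Measure (ι → ℝ)) (N : ℕ∞)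
    (p : (ι →₀ ℕ) → MvPolynomial ι ℝ) : Prop :=
  p 0 = 1 ∧
  (∀ β : ι →₀ ℕ, (mdeg β : ℕ∞) < N → ∀ j : ι,
      pderiv j (p β) = (β j : ℝ) • p (β - Finsupp.single j 1)) ∧
  (∀ β : ι →₀ ℕ, 0 < mdeg β → (mdeg β : ℕ∞) < N → ∫ x, eval x (p β) ∂μ = 0)

def HasMoments {ι : Type*} [Fintype ι] (μ : Measure (ι → ℝ)) (N : ℕ∞) : Prop :=
  ∀ k : ℕ, (k : ℕ∞) < N → Integrable (fun x : ι → ℝ => (∑ i, |x i|) ^ k) μ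

/-!
Since the law of `Y` is the pushforward of the law of `X` under `x ↦ x ∘ J`, it suffices to
prove the polynomial identity `rename J (pY α) = p (α.mapDomain J)`, by induction on `|α|`.
By the chain rule for `rename`, the Segal recursion and the induction hypothesis, both sides have
the same partial derivatives, so they differ by a constant. Both have mean zero under the law of
`X` and are integrable by the moment assumption, so the constant vanishes.
-/

namespace MvPolynomial

variable {σ R : Type*} [CommSemiring R] [NoZeroDivisors R] [CharZero R]

theorem tsub_single_mem_support_pderiv {φ : MvPolynomial σ R} {d : σ →₀ ℕ}
    (hd : d ∈ φ.support) {i : σ} (hi : d i ≠ 0) :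
    d - Finsupp.single i 1 ∈ (pderiv i φ).support := by
  have hle : Finsupp.single i 1 ≤ d := Finsupp.single_le_iff.mpr (Nat.one_le_iff_ne_zero.mpr hi)
  rw [mem_support_iff, coeff_pderiv, tsub_add_cancel_of_le hle]
  exact mul_ne_zero (mem_support_iff.mp hd) (Nat.cast_add_one_ne_zero _)

theorem eq_C_of_forall_pderiv_eq_zero {φ : MvPolynomial σ R} (h : ∀ i, pderiv i φ = 0) :
    φ = C (coeff 0 φ) := by
  classical
  ext d
  rcases eq_or_ne d 0 with rfl | hd
  · simp
  obtain ⟨i, hi⟩ := Finsupp.ne_iff.mp hd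
  rw [coeff_C, if_neg (Ne.symm hd), ← notMem_support_iff]
  intro hmem
  simpa [h i] using tsub_single_mem_support_pderiv hmem hi

theorem totalDegree_le_succ_of_forall_pderiv {φ : MvPolynomial σ R} {k : ℕ}
    (h : ∀ i, (pderiv i φ).totalDegree ≤ k) : φ.totalDegree ≤ k + 1 := by
  refine Finset.sup_le fun d hd => ?_
  rcases eq_or_ne d 0 with rfl | hd0
  · simp
  obtain ⟨i, hi⟩ := Finsupp.ne_iff.mp hd0
  have hle : Finsupp.single i 1 ≤ d := Finsupp.single_le_iff.mpr (Nat.one_le_iff_ne_zero.mpr hi)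
  have hdeg := congrArg Finsupp.degree (tsub_add_cancel_of_le hle)
  rw [map_add, Finsupp.degree_single] at hdeg
  have := (le_totalDegree (tsub_single_mem_support_pderiv hd hi)).trans (h i)
  change d.degree ≤ k + 1
  change (d - Finsupp.single i 1).degree ≤ k at this
  omega

end MvPolynomial

theorem MvPolynomial.pderiv_rename_eq_sum {σ τ R : Type*} [CommSemiring R] [Fintype σ]
    [DecidableEq σ] [DecidableEq τ] (J : σ → τ) (φ : MvPolynomial σ R) (j : τ) :
    pderiv j (rename J φ) = ∑ i with J i = j, rename J (pderiv i φ) := by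
  induction φ using MvPolynomial.induction_on with
  | C a => simp
  | add p q hp hq => simp [hp, hq, Finset.sum_add_distrib]
  | mul_X p i hp =>
    simp [hp, Finset.sum_add_distrib, Finset.mul_sum, Pi.single_apply, apply_ite]

theorem MvPolynomial.eq_of_forall_pderiv_eq_of_integral_eq {ι : Type*}
    {μ : Measure (ι → ℝ)} [IsProbabilityMeasure μ] {φ ψ : MvPolynomial ι ℝ}
    (hd : ∀ i, pderiv i φ = pderiv i ψ) (hψ : Integrable (fun x => eval x ψ) μ)
    (hint : ∫ x, eval x φ ∂μ = ∫ x, eval x ψ ∂μ) : φ = ψ := by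
  obtain ⟨c, hc⟩ : ∃ c, φ - ψ = C c :=
    ⟨_, eq_C_of_forall_pderiv_eq_zero fun i => by rw [map_sub, hd, sub_self]⟩
  rw [sub_eq_iff_eq_add'] at hc
  subst hc
  simp only [eval_add, eval_C, integral_add hψ (integrable_const c), integral_const,
    probReal_univ, one_smul, add_eq_left] at hint
  simp [hint]

namespace Finsupp

theorem mapDomain_apply_eq_sum_filter {σ τ M : Type*} [Fintype σ] [DecidableEq τ]
    [AddCommMonoid M] (J : σ → τ) (α : σ →₀ M) (j : τ) :
    α.mapDomain J j = ∑ i with J i = j, α i := by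
  simp [mapDomain, sum_fintype, single_apply, Finset.sum_filter]

theorem mapDomain_tsub_single {σ τ : Type*} (J : σ → τ) {α : σ →₀ ℕ} {i : σ} (hi : α i ≠ 0) :
    (α - single i 1).mapDomain J = α.mapDomain J - single (J i) 1 := by
  conv_rhs => rw [← tsub_add_cancel_of_le (single_le_iff.mpr (Nat.one_le_iff_ne_zero.mpr hi))]
  rw [mapDomain_add, mapDomain_single, add_tsub_cancel_right]

end Finsupp

theorem prod_comp_pow_eq_prod_pow_mapDomain {σ τ M : Type*} [Fintype σ] [Fintype τ]
    [CommMonoid M] (J : σ → τ) (α : σ →₀ ℕ) (x : τ → M) :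
    ∏ i, x (J i) ^ α i = ∏ j, x j ^ α.mapDomain J j := by
  rw [← Finsupp.prod_fintype _ (fun i e => x (J i) ^ e) fun _ => pow_zero _,
    ← Finsupp.prod_fintype _ (fun j e => x j ^ e) fun _ => pow_zero _,
    Finsupp.prod_mapDomain_index (fun _ => pow_zero _) fun _ _ _ => pow_add _ _ _]

section

variable {ι : Type*} [Fintype ι]

theorem mdeg_eq_degree (β : ι →₀ ℕ) : mdeg β = β.degree := (Finsupp.degree_eq_sum β).symm

theorem mdeg_eq_zero_iff {β : ι →₀ ℕ} : mdeg β = 0 ↔ β = 0 := by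
  rw [mdeg_eq_degree, Finsupp.degree_eq_zero_iff]

theorem mdeg_mapDomain {κ : Type*} [Fintype κ] (J : ι → κ) (α : ι →₀ ℕ) :
    mdeg (α.mapDomain J) = mdeg α := by
  rw [mdeg_eq_degree, mdeg_eq_degree, Finsupp.degree_mapDomain]

theorem mdeg_tsub_single_add_one {β : ι →₀ ℕ} {i : ι} (hi : β i ≠ 0) :
    mdeg (β - Finsupp.single i 1) + 1 = mdeg β := by
  have h := congrArg Finsupp.degree
    (tsub_add_cancel_of_le (Finsupp.single_le_iff.mpr (Nat.one_le_iff_ne_zero.mpr hi)))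
  rwa [map_add, Finsupp.degree_single, ← mdeg_eq_degree, ← mdeg_eq_degree] at h

theorem abs_prod_pow_le_sum_abs_pow_mdeg (x : ι → ℝ) (u : ι →₀ ℕ) :
    |∏ i, x i ^ u i| ≤ (∑ i, |x i|) ^ mdeg u := by
  rw [Finset.abs_prod, mdeg, ← Finset.prod_pow_eq_pow_sum]
  gcongr with i
  rw [abs_pow]
  gcongr
  exact Finset.single_le_sum (fun j _ => abs_nonneg (x j)) (Finset.mem_univ i)

theorem HasMoments.integrable_eval {μ : Measure (ι → ℝ)} {N : ℕ∞} (hμ : HasMoments μ N)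
    {φ : MvPolynomial ι ℝ} (hφ : (φ.totalDegree : ℕ∞) < N) :
    Integrable (fun x => eval x φ) μ := by
  simp_rw [eval_eq']
  refine integrable_finsetSum _ fun u hu => ?_
  have hu : (mdeg u : ℕ∞) < N :=
    lt_of_le_of_lt (by exact_mod_cast (mdeg_eq_degree u).trans_le (le_totalDegree hu)) hφ
  refine ((hμ _ hu).const_mul |coeff u φ|).mono'
    (Continuous.aestronglyMeasurable (by fun_prop)) (ae_of_all _ fun x => ?_)
  rw [norm_mul, Real.norm_eq_abs, Real.norm_eq_abs]
  gcongr
  exact abs_prod_pow_le_sum_abs_pow_mdeg x u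

end

namespace IsSegalFamily

theorem totalDegree_le {ι : Type*} [Fintype ι] [DecidableEq ι] {μ : Measure (ι → ℝ)} {N : ℕ∞}
    {p : (ι →₀ ℕ) → MvPolynomial ι ℝ} (hp : IsSegalFamily μ N p) {β : ι →₀ ℕ}
    (hβ : (mdeg β : ℕ∞) < N) : (p β).totalDegree ≤ mdeg β := by
  obtain ⟨k, hk⟩ : ∃ k, mdeg β = k := ⟨_, rfl⟩
  induction k generalizing β with
  | zero => rw [hk, mdeg_eq_zero_iff.mp hk, hp.1, totalDegree_one]
  | succ k ih =>
    rw [hk]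
    refine totalDegree_le_succ_of_forall_pderiv fun j => ?_
    rw [hp.2.1 β hβ j]
    rcases eq_or_ne (β j) 0 with h0 | h0
    · simp [h0]
    have hdeg := mdeg_tsub_single_add_one h0
    have hk' : mdeg (β - Finsupp.single j 1) = k := by omega
    exact (totalDegree_smul_le _ _).trans
      ((ih ((Nat.cast_le.mpr (by omega)).trans_lt hβ) hk').trans_eq hk')

theorem rename_eq_mapDomain {σ τ : Type*} [Fintype σ] [Fintype τ] [DecidableEq σ]
    [DecidableEq τ] {μ : Measure (τ → ℝ)} [IsProbabilityMeasure μ] {N : ℕ∞}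
    (hμ : HasMoments μ N) (J : σ → τ) {p : (τ →₀ ℕ) → MvPolynomial τ ℝ}
    {q : (σ →₀ ℕ) → MvPolynomial σ ℝ} (hp : IsSegalFamily μ N p)
    (hq : IsSegalFamily (μ.map (fun x => x ∘ J)) N q) {α : σ →₀ ℕ}
    (hα : (mdeg α : ℕ∞) < N) : rename J (q α) = p (α.mapDomain J) := by
  obtain ⟨k, hk⟩ : ∃ k, mdeg α = k := ⟨_, rfl⟩
  induction k generalizing α with
  | zero => simp [mdeg_eq_zero_iff.mp hk, hp.1, hq.1]
  | succ k ih =>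
    have hβ : (mdeg (α.mapDomain J) : ℕ∞) < N := by rwa [mdeg_mapDomain]
    have hJ : Measurable fun x : τ → ℝ => x ∘ J := by fun_prop
    refine eq_of_forall_pderiv_eq_of_integral_eq (μ := μ) (fun j => ?_)
      (hμ.integrable_eval ((Nat.cast_le.mpr (hp.totalDegree_le hβ)).trans_lt hβ)) ?_
    · rw [pderiv_rename_eq_sum, hp.2.1 _ hβ j, Finsupp.mapDomain_apply_eq_sum_filter,
        Nat.cast_sum, Finset.sum_smul]
      refine Finset.sum_congr rfl fun i hi => ?_
      rw [hq.2.1 α hα i, map_smul]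
      rcases eq_or_ne (α i) 0 with h0 | h0
      · simp [h0]
      have hdeg := mdeg_tsub_single_add_one h0
      rw [ih ((Nat.cast_le.mpr (by omega)).trans_lt hα) (by omega),
        Finsupp.mapDomain_tsub_single J h0, (Finset.mem_filter.mp hi).2]
    · simp_rw [eval_rename]
      rw [← integral_map hJ.aemeasurable (continuous_eval _).aestronglyMeasurable,
        hq.2.2 α (by omega) hα, hp.2.2 _ (by rw [mdeg_mapDomain]; omega) hβ]

end IsSegalFamily

theorem wick_partial_trace {n m : ℕ} {Ω : Type*} [MeasurableSpace Ω]
    (P : Measure Ω) [IsProbabilityMeasure P]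
    (X : Ω → Fin n → ℝ) (hX : Measurable X)
    (J : Fin m → Fin n) (α : Fin m →₀ ℕ) (β : Fin n →₀ ℕ)
    (hβ : ∀ j, β j = ∑ i, if J i = j then α i else 0)
    (N : ℕ∞) (hα : (mdeg α : ℕ∞) < N)
    (hmom : ∀ k : ℕ, (k : ℕ∞) < N → Integrable (fun ω => (∑ i, |X ω i|) ^ k) P)
    (p : (Fin n →₀ ℕ) → MvPolynomial (Fin n) ℝ)
    (pY : (Fin m →₀ ℕ) → MvPolynomial (Fin m) ℝ)
    (hp : IsSegalFamily (P.map X) N p)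
    (hpY : IsSegalFamily (P.map (fun ω (i : Fin m) => X ω (J i))) N pY) :
    (∀ ω, ∏ i, X ω (J i) ^ α i = ∏ j, X ω j ^ β j) ∧
    (∀ᵐ ω ∂P, eval (fun i => X ω (J i)) (pY α) = eval (X ω) (p β)) := by
  have hβJ : β = α.mapDomain J := Finsupp.ext fun j => by
    rw [hβ, Finsupp.mapDomain_apply_eq_sum_filter, Finset.sum_filter]
  subst hβJ
  have := Measure.isProbabilityMeasure_map (μ := P) hX.aemeasurable
  have hmomX : HasMoments (P.map X) N := fun k hk =>
    (integrable_map_measure (Continuous.aestronglyMeasurable (by fun_prop))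
      hX.aemeasurable).mpr (hmom k hk)
  have hpY' : IsSegalFamily ((P.map X).map fun x => x ∘ J) N pY := by
    rwa [Measure.map_map (by fun_prop) hX]
  have hrename := IsSegalFamily.rename_eq_mapDomain hmomX J hp hpY' hα
  refine ⟨fun ω => prod_comp_pow_eq_prod_pow_mapDomain J α (X ω), ae_of_all _ fun ω => ?_⟩
  rw [← hrename, eval_rename]
  rfl

end
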